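/- Suppose |V| = |R × S| and the linear map K_1 : ℂ^V → ℂ^{R×S} is invertible, and set C_p = min_{‖η‖_{ℓ^p} = 1} ‖K_1 η‖_{ℓ^p}. Then for every η ∈ ℂ^V with ‖η‖_{ℓ^p} < 1/μ_p, the sum of the forward Born series satisfies the lower bound ‖Σ_{j=1}^∞ K_j(η, …, η)‖_{ℓ^p} ≥ C_p ‖η‖_{ℓ^p} − ν_p μ_p ‖η‖_{ℓ^p}^2 / (1 − μ_p ‖η‖_{ℓ^p}). -/

import Mathlib

/-! By Hölder's inequality, each multiplication by `G D_η` multiplies the largest entry of a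
column by at most `(μ_p / α0) ‖η‖_p`, so the `(r, s)` entry of `K_{j+1}(η, …, η)` is at most
`α0 ‖η‖_p (μ_p ‖η‖_p)^j` times `‖row r of B‖_q ‖column s of C‖_q`. Taking ℓ^p norms over `R × S`
gives `‖K_{j+1}(η, …, η)‖_p ≤ ν_p ‖η‖_p (μ_p ‖η‖_p)^j`, a geometric series. Its first term is at
least `C_p ‖η‖_p` by homogeneity of `K_1`, and the rest sums to at most
`ν_p μ_p ‖η‖_p² / (1 − μ_p ‖η‖_p)`. -/

open scoped ENNReal

/-- The ℓ^p norm of a finitely indexed family, `p ∈ [1, ∞]`. -/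
noncomputable def lpNorm (p : ℝ≥0∞) {ι E : Type*} [Fintype ι] [SeminormedAddCommGroup E]
    (f : ι → E) : ℝ :=
  if p = ∞ then ⨆ i, ‖f i‖ else (∑ i, ‖f i‖ ^ p.toReal) ^ (1 / p.toReal)

section lpNorm

variable {ι κ E : Type*} [Fintype ι] [Fintype κ] [SeminormedAddCommGroup E] {p : ℝ≥0∞}

lemma lpNorm_eq_norm_toLp [Fact (1 ≤ p)] (f : ι → E) : lpNorm p f = ‖WithLp.toLp p f‖ := by
  unfold lpNorm
  split_ifs with h
  · subst h
    exact (PiLp.norm_eq_ciSup _).symm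
  · exact (PiLp.norm_eq_sum (ENNReal.toReal_pos (zero_lt_one.trans_le Fact.out).ne' h) _).symm

lemma lpNorm_nonneg (f : ι → E) : 0 ≤ lpNorm p f := by
  unfold lpNorm
  split_ifs
  · exact Real.iSup_nonneg fun i => norm_nonneg _
  · positivity

lemma lpNorm_one (f : ι → E) : lpNorm 1 f = ∑ i, ‖f i‖ := by
  simp [lpNorm]

lemma norm_le_lpNorm [Fact (1 ≤ p)] (f : ι → E) (i : ι) : ‖f i‖ ≤ lpNorm p f := by
  rw [lpNorm_eq_norm_toLp]
  exact PiLp.norm_apply_le (WithLp.toLp p f) i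

lemma lpNorm_mono {F : Type*} [SeminormedAddCommGroup F] {f : ι → E} {g : ι → F}
    (h : ∀ i, ‖f i‖ ≤ ‖g i‖) : lpNorm p f ≤ lpNorm p g := by
  unfold lpNorm
  split_ifs
  · exact ciSup_mono (Set.finite_range _).bddAbove h
  · gcongr with i
    exact h i

lemma lpNorm_smul [Fact (1 ≤ p)] {𝕜 : Type*} [NormedField 𝕜] [NormedSpace 𝕜 E] (c : 𝕜)
    (f : ι → E) : lpNorm p (c • f) = ‖c‖ * lpNorm p f := by
  rw [lpNorm_eq_norm_toLp, lpNorm_eq_norm_toLp, WithLp.toLp_smul, norm_smul]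

lemma lpNorm_tsum_eq_norm_tsum_toLp [Fact (1 ≤ p)] {F : Type*} [NormedAddCommGroup F] (f : ℕ → ι → F) :
    lpNorm p (∑' j, f j) = ‖∑' j, WithLp.toLp p (f j)‖ := by
  rw [lpNorm_eq_norm_toLp, ← PiLp.coe_symm_continuousLinearEquiv p ℤ,
    ContinuousLinearEquiv.map_tsum]

lemma lpNorm_le_mul_lpNorm [Fact (1 ≤ p)] {F : Type*} [SeminormedAddCommGroup F] {f : ι → E}
    {g : ι → F} {c : ℝ} (hc : 0 ≤ c) (h : ∀ i, ‖f i‖ ≤ c * ‖g i‖) :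
    lpNorm p f ≤ c * lpNorm p g :=
  calc lpNorm p f ≤ lpNorm p (c • fun i => ‖g i‖) :=
        lpNorm_mono fun i => by simpa [abs_of_nonneg hc] using h i
    _ = c * lpNorm p g := by
        rw [lpNorm_smul, Real.norm_of_nonneg hc]
        simp [lpNorm]

lemma lpNorm_mul_prod_le [Fact (1 ≤ p)] {𝕜 : Type*} [SeminormedRing 𝕜] (a : ι → 𝕜) (b : κ → 𝕜) :
    lpNorm p (fun x : ι × κ => a x.1 * b x.2) ≤ lpNorm p a * lpNorm p b := by
  unfold lpNorm
  split_ifs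
  · have ha := (Set.finite_range fun i => ‖a i‖).bddAbove
    have hb := (Set.finite_range fun k => ‖b k‖).bddAbove
    refine Real.iSup_le (fun x => (norm_mul_le _ _).trans ?_)
      (mul_nonneg (Real.iSup_nonneg fun _ => norm_nonneg _) (Real.iSup_nonneg fun _ => norm_nonneg _))
    exact mul_le_mul (le_ciSup ha x.1) (le_ciSup hb x.2) (norm_nonneg _)
      (Real.iSup_nonneg fun _ => norm_nonneg _)
  · calc (∑ x : ι × κ, ‖a x.1 * b x.2‖ ^ p.toReal) ^ (1 / p.toReal)
        ≤ (∑ x : ι × κ, (‖a x.1‖ * ‖b x.2‖) ^ p.toReal) ^ (1 / p.toReal) := by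
          gcongr with x
          exact norm_mul_le _ _
      _ = ((∑ i, ‖a i‖ ^ p.toReal) * ∑ k, ‖b k‖ ^ p.toReal) ^ (1 / p.toReal) := by
          simp_rw [Real.mul_rpow (norm_nonneg _) (norm_nonneg _), Finset.sum_mul_sum,
            Fintype.sum_prod_type]
      _ = _ := Real.mul_rpow (by positivity) (by positivity)

end lpNorm

section holder

variable {ι 𝕜 : Type*} [Fintype ι] [SeminormedRing 𝕜]

lemma sum_norm_mul_le_lpNorm_top_mul_lpNorm_one (f g : ι → 𝕜) :
    ∑ i, ‖f i‖ * ‖g i‖ ≤ lpNorm ∞ f * lpNorm 1 g := by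
  rw [lpNorm_one, Finset.mul_sum]
  gcongr with i
  exact norm_le_lpNorm f i

theorem norm_sum_mul_le_lpNorm_mul_lpNorm {p q : ℝ≥0∞} [p.HolderConjugate q] (f g : ι → 𝕜) :
    ‖∑ i, f i * g i‖ ≤ lpNorm p f * lpNorm q g := by
  refine (norm_sum_le _ _).trans <| (Finset.sum_le_sum fun i _ => norm_mul_le _ _).trans ?_
  by_cases hp : p = ∞
  · obtain rfl : q = 1 := (ENNReal.HolderConjugate.eq_top_iff_eq_one p q).mp hp
    subst hp
    exact sum_norm_mul_le_lpNorm_top_mul_lpNorm_one f g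
  by_cases hq : q = ∞
  · obtain rfl : p = 1 := (ENNReal.HolderConjugate.eq_top_iff_eq_one q p).mp hq
    subst hq
    simpa only [mul_comm] using sum_norm_mul_le_lpNorm_top_mul_lpNorm_one g f
  have := Real.inner_le_Lp_mul_Lq_of_nonneg Finset.univ
    (ENNReal.HolderConjugate.toReal_of_ne_top hp hq) (fun i _ => norm_nonneg (f i))
    (fun i _ => norm_nonneg (g i))
  simpa [lpNorm, hp, hq] using this

end holder

section matrix

open Matrix

variable {l m n 𝕜 : Type*} [Fintype m] [DecidableEq m] [SeminormedRing 𝕜] {p q : ℝ≥0∞}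
  [p.HolderConjugate q]

lemma norm_mul_diagonal_mul_apply_le (M : Matrix l m 𝕜) (η : m → 𝕜) (X : Matrix m n 𝕜) (i : l)
    (k : n) {c : ℝ} (hc : 0 ≤ c) (hX : ∀ j, ‖X j k‖ ≤ c) :
    ‖(M * diagonal η * X) i k‖ ≤ lpNorm q (M i) * (lpNorm p η * c) := by
  have : Fact (1 ≤ p) := ⟨ENNReal.HolderConjugate.one_le p q⟩
  have hentry : (M * diagonal η * X) i k = ∑ j, M i j * (η j * X j k) := by
    rw [Matrix.mul_assoc, mul_apply]
    simp only [diagonal_mul]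
  have hηX : lpNorm p (fun j => η j * X j k) ≤ c * lpNorm p η :=
    lpNorm_le_mul_lpNorm hc fun j => (norm_mul_le _ _).trans <| by
      rw [mul_comm]
      exact mul_le_mul_of_nonneg_right (hX j) (norm_nonneg _)
  calc ‖(M * diagonal η * X) i k‖ ≤ lpNorm q (M i) * lpNorm p (fun j => η j * X j k) := by
        rw [hentry]
        exact norm_sum_mul_le_lpNorm_mul_lpNorm _ _
    _ ≤ lpNorm q (M i) * (lpNorm p η * c) := by
        rw [mul_comm (lpNorm p η)]
        exact mul_le_mul_of_nonneg_left hηX (lpNorm_nonneg _)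

lemma norm_pow_mul_diagonal_mul_apply_le (G : Matrix m m 𝕜) (η : m → 𝕜) (C : Matrix m n 𝕜) {g : ℝ}
    (hg : 0 ≤ g) (hG : ∀ v, lpNorm q (G v) ≤ g) (j : ℕ) (v : m) (s : n) :
    ‖((G * diagonal η) ^ j * C) v s‖ ≤ (g * lpNorm p η) ^ j * lpNorm q (fun u => C u s) := by
  have : Fact (1 ≤ q) := ⟨ENNReal.HolderConjugate.one_le q p⟩
  induction j generalizing v with
  | zero => simpa using norm_le_lpNorm (fun u => C u s) v
  | succ j ih =>
    rw [pow_succ', Matrix.mul_assoc]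
    have hc : 0 ≤ (g * lpNorm p η) ^ j * lpNorm q fun u => C u s :=
      mul_nonneg (pow_nonneg (mul_nonneg hg (lpNorm_nonneg _)) _) (lpNorm_nonneg _)
    refine (norm_mul_diagonal_mul_apply_le (p := p) (q := q) G η _ v s hc ih).trans ?_
    calc lpNorm q (G v) * (lpNorm p η * ((g * lpNorm p η) ^ j * lpNorm q fun u => C u s))
        ≤ g * (lpNorm p η * ((g * lpNorm p η) ^ j * lpNorm q fun u => C u s)) := by
          exact mul_le_mul_of_nonneg_right (hG v) (mul_nonneg (lpNorm_nonneg _) hc)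
      _ = (g * lpNorm p η) ^ (j + 1) * lpNorm q fun u => C u s := by ring

end matrix

theorem norm_sub_le_norm_tsum_of_norm_le_geometric {E : Type*} [NormedAddCommGroup E]
    [CompleteSpace E] {x : ℕ → E} {a t : ℝ} (ht0 : 0 ≤ t) (ht1 : t < 1)
    (hx : ∀ j, ‖x j‖ ≤ a * t ^ j) :
    ‖x 0‖ - a * t / (1 - t) ≤ ‖∑' j, x j‖ := by
  have hsum : Summable x := .of_norm_bounded ((summable_geometric_of_lt_one ht0 ht1).mul_left a) hx
  have htail : ‖∑' j, x (j + 1)‖ ≤ a * t / (1 - t) := by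
    refine tsum_of_norm_bounded (g := fun j => a * t * t ^ j) ?_ fun j =>
      (hx (j + 1)).trans_eq (by ring)
    simpa only [div_eq_mul_inv] using (hasSum_geometric_of_lt_one ht0 ht1).mul_left (a * t)
  rw [hsum.tsum_eq_zero_add]
  linarith [norm_le_add_norm_add (x 0) (∑' j, x (j + 1))]

variable {V R S : Type*} [Fintype V] [DecidableEq V] [Fintype R] [Fintype S]

/-- The multilinear forward Born operator: `bornK α0 B G C j` is `K_j`, mapping
`(η_1, …, η_j)` (given as the first `j` values of an `ℕ`-indexed family) to
`(r, s) ↦ (−α0)^j (B D_{η_1} G D_{η_2} G ⋯ G D_{η_j} C)(r, s)`; `K_0 := 0` is junk. -/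
noncomputable def bornK (α0 : ℝ) (B : Matrix R V ℂ) (G : Matrix V V ℂ) (C : Matrix V S ℂ) :
    ℕ → (ℕ → V → ℂ) → R × S → ℂ
  | 0, _ => 0
  | j + 1, η => fun rs =>
      (-(α0 : ℂ)) ^ (j + 1) *
        (B * Matrix.diagonal (η 0) *
          (List.ofFn fun i : Fin j => G * Matrix.diagonal (η (i.1 + 1))).prod * C) rs.1 rs.2

/-- `μ_p = α0 · max_{v ∈ V} ‖row v of G‖_{ℓ^q}` (this depends only on `q`). -/
noncomputable def muConst (α0 : ℝ) (q : ℝ≥0∞) (G : Matrix V V ℂ) : ℝ :=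
  α0 * ⨆ v : V, lpNorm q (G v)

/-- `ν_p = α0 · (Σ_{r ∈ R} ‖row r of B‖_q^p)^{1/p} · (Σ_{s ∈ S} ‖column s of C‖_q^p)^{1/p}`,
with maxima replacing sums when `p = ∞`. -/
noncomputable def nuConst (α0 : ℝ) (p q : ℝ≥0∞) (B : Matrix R V ℂ) (C : Matrix V S ℂ) : ℝ :=
  α0 * lpNorm p (fun r : R => lpNorm q (B r)) * lpNorm p (fun s : S => lpNorm q fun v => C v s)

/-- `C_p = min_{‖η‖_p = 1} ‖K_1 η‖_p`. -/
noncomputable def CpConst (p : ℝ≥0∞) (α0 : ℝ) (B : Matrix R V ℂ) (G : Matrix V V ℂ)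
    (C : Matrix V S ℂ) : ℝ :=
  sInf {t : ℝ | ∃ η : V → ℂ, lpNorm p η = 1 ∧ t = lpNorm p (bornK α0 B G C 1 fun _ => η)}

section born

open Matrix

variable {α0 : ℝ} {B : Matrix R V ℂ} {G : Matrix V V ℂ} {C : Matrix V S ℂ}

omit [Fintype R] [Fintype S] in
lemma bornK_succ_const_apply (j : ℕ) (η : V → ℂ) (r : R) (s : S) :
    bornK α0 B G C (j + 1) (fun _ => η) (r, s) =
      (-(α0 : ℂ)) ^ (j + 1) * (B * diagonal η * ((G * diagonal η) ^ j * C)) r s := by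
  simp only [bornK, List.ofFn_const, List.prod_replicate, Matrix.mul_assoc]

omit [Fintype R] [Fintype S] in
lemma bornK_one_smul (c : ℂ) (η : V → ℂ) :
    (bornK α0 B G C 1 fun _ => c • η) = c • bornK α0 B G C 1 fun _ => η := by
  funext ⟨r, s⟩
  simp only [Pi.smul_apply, bornK_succ_const_apply 0, pow_zero, Matrix.one_mul, diagonal_smul,
    Matrix.mul_smul, Matrix.smul_mul, Matrix.smul_apply, smul_eq_mul]
  ring

lemma CpConst_mul_lpNorm_le {p : ℝ≥0∞} [Fact (1 ≤ p)] (η : V → ℂ) :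
    CpConst p α0 B G C * lpNorm p η ≤ lpNorm p (bornK α0 B G C 1 fun _ => η) := by
  rcases (lpNorm_nonneg (p := p) η).eq_or_lt with h0 | hpos
  · rw [← h0, mul_zero]
    exact lpNorm_nonneg _
  set N := lpNorm p η
  have hunit : lpNorm p ((N : ℂ)⁻¹ • η) = 1 := by
    rw [lpNorm_smul, norm_inv, Complex.norm_real, Real.norm_of_nonneg hpos.le,
      inv_mul_cancel₀ hpos.ne']
  have hle : CpConst p α0 B G C ≤ lpNorm p (bornK α0 B G C 1 fun _ => (N : ℂ)⁻¹ • η) :=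
    csInf_le ⟨0, by rintro _ ⟨_, _, rfl⟩; exact lpNorm_nonneg _⟩ ⟨_, hunit, rfl⟩
  rw [bornK_one_smul, lpNorm_smul, norm_inv, Complex.norm_real, Real.norm_of_nonneg hpos.le,
    le_inv_mul_iff₀ hpos] at hle
  rwa [mul_comm]

omit [Fintype R] [Fintype S] in
lemma norm_bornK_succ_apply_le {p q : ℝ≥0∞} [p.HolderConjugate q] (hα0 : 0 ≤ α0) {g : ℝ}
    (hg : 0 ≤ g) (hG : ∀ v, lpNorm q (G v) ≤ g) (j : ℕ) (η : V → ℂ) (r : R) (s : S) :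
    ‖bornK α0 B G C (j + 1) (fun _ => η) (r, s)‖ ≤
      α0 ^ (j + 1) * lpNorm p η * (g * lpNorm p η) ^ j *
        (lpNorm q (B r) * lpNorm q fun v => C v s) := by
  have hcol : 0 ≤ (g * lpNorm p η) ^ j * lpNorm q fun v => C v s :=
    mul_nonneg (pow_nonneg (mul_nonneg hg (lpNorm_nonneg _)) _) (lpNorm_nonneg _)
  rw [bornK_succ_const_apply, norm_mul, norm_pow, norm_neg, Complex.norm_real,
    Real.norm_of_nonneg hα0]
  calc α0 ^ (j + 1) * ‖(B * diagonal η * ((G * diagonal η) ^ j * C)) r s‖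
      ≤ α0 ^ (j + 1) * (lpNorm q (B r) *
          (lpNorm p η * ((g * lpNorm p η) ^ j * lpNorm q fun v => C v s))) :=
        mul_le_mul_of_nonneg_left (norm_mul_diagonal_mul_apply_le B η _ r s hcol fun u =>
          norm_pow_mul_diagonal_mul_apply_le G η C hg hG j u s) (by positivity)
    _ = _ := by ring

lemma lpNorm_bornK_succ_le {p q : ℝ≥0∞} [p.HolderConjugate q] (hα0 : 0 ≤ α0) (j : ℕ)
    (η : V → ℂ) :
    lpNorm p (bornK α0 B G C (j + 1) fun _ => η) ≤
      nuConst α0 p q B C * lpNorm p η * (muConst α0 q G * lpNorm p η) ^ j := by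
  have : Fact (1 ≤ p) := ⟨ENNReal.HolderConjugate.one_le p q⟩
  set g := ⨆ v, lpNorm q (G v)
  set N := lpNorm p η
  have hg : 0 ≤ g := Real.iSup_nonneg fun _ => lpNorm_nonneg _
  have hG : ∀ v, lpNorm q (G v) ≤ g := le_ciSup (Set.finite_range _).bddAbove
  have hc : 0 ≤ α0 ^ (j + 1) * N * (g * N) ^ j :=
    mul_nonneg (mul_nonneg (pow_nonneg hα0 _) (lpNorm_nonneg _))
      (pow_nonneg (mul_nonneg hg (lpNorm_nonneg _)) _)
  calc lpNorm p (bornK α0 B G C (j + 1) fun _ => η)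
      ≤ α0 ^ (j + 1) * N * (g * N) ^ j *
          lpNorm p (fun x : R × S => lpNorm q (B x.1) * lpNorm q fun v => C v x.2) :=
        lpNorm_le_mul_lpNorm hc fun ⟨r, s⟩ =>
          (norm_bornK_succ_apply_le hα0 hg hG j η r s).trans_eq <| by
            rw [Real.norm_of_nonneg (mul_nonneg (lpNorm_nonneg _) (lpNorm_nonneg _))]
    _ ≤ α0 ^ (j + 1) * N * (g * N) ^ j *
          (lpNorm p (fun r => lpNorm q (B r)) * lpNorm p fun s => lpNorm q fun v => C v s) :=
        mul_le_mul_of_nonneg_left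
          (lpNorm_mul_prod_le (fun r => lpNorm q (B r)) fun s => lpNorm q fun v => C v s) hc
    _ = nuConst α0 p q B C * N * (muConst α0 q G * N) ^ j := by
        simp only [nuConst, muConst, g]
        ring

end born

theorem forward_born_sum_lower_bound_general
    (p q : ℝ≥0∞) (hpq : 1 / p + 1 / q = 1)
    (α0 : ℝ) (hα0 : 0 < α0) (B : Matrix R V ℂ) (G : Matrix V V ℂ) (C : Matrix V S ℂ)
    (η : V → ℂ) (hη : lpNorm p η < 1 / muConst α0 q G) :
    CpConst p α0 B G C * lpNorm p η -
        nuConst α0 p q B C * muConst α0 q G * lpNorm p η ^ 2 /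
          (1 - muConst α0 q G * lpNorm p η) ≤
      lpNorm p (∑' j : ℕ, bornK α0 B G C (j + 1) fun _ => η) := by
  have : p.HolderConjugate q :=
    ENNReal.holderConjugate_iff.mpr (by simpa only [one_div] using hpq)
  have : Fact (1 ≤ p) := ⟨ENNReal.HolderConjugate.one_le p q⟩
  set μ := muConst α0 q G
  set N := lpNorm p η
  have hN : 0 ≤ N := lpNorm_nonneg η
  have hμ : 0 < μ := by
    by_contra! h
    exact (one_div_nonpos.mpr h).not_gt (hN.trans_lt hη)
  have ht1 : μ * N < 1 := by rwa [lt_div_iff₀ hμ, mul_comm] at hη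
  rw [lpNorm_tsum_eq_norm_tsum_toLp]
  calc CpConst p α0 B G C * N - nuConst α0 p q B C * μ * N ^ 2 / (1 - μ * N)
      ≤ lpNorm p (bornK α0 B G C 1 fun _ => η) -
          nuConst α0 p q B C * N * (μ * N) / (1 - μ * N) := by
        rw [show nuConst α0 p q B C * μ * N ^ 2 = nuConst α0 p q B C * N * (μ * N) by ring]
        exact sub_le_sub_right (CpConst_mul_lpNorm_le η) _
    _ ≤ ‖∑' j, WithLp.toLp p (bornK α0 B G C (j + 1) fun _ => η)‖ := by
        rw [lpNorm_eq_norm_toLp]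
        refine norm_sub_le_norm_tsum_of_norm_le_geometric
          (x := fun j => WithLp.toLp p (bornK α0 B G C (j + 1) fun _ => η))
          (mul_nonneg hμ.le hN) ht1 fun j => ?_
        rw [← lpNorm_eq_norm_toLp]
        exact lpNorm_bornK_succ_le hα0.le j η

theorem forward_born_sum_lower_bound [Nonempty V] [Nonempty R] [Nonempty S]
    (p q : ℝ≥0∞) (hp : 1 ≤ p) (hq : 1 ≤ q) (hpq : 1 / p + 1 / q = 1)
    (α0 : ℝ) (hα0 : 0 < α0) (B : Matrix R V ℂ) (G : Matrix V V ℂ) (C : Matrix V S ℂ)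
    (hcard : Fintype.card V = Fintype.card (R × S))
    (hinv : Function.Bijective fun η : V → ℂ => bornK α0 B G C 1 fun _ => η)
    (η : V → ℂ) (hη : lpNorm p η < 1 / muConst α0 q G) :
    CpConst p α0 B G C * lpNorm p η -
        nuConst α0 p q B C * muConst α0 q G * lpNorm p η ^ 2 /
          (1 - muConst α0 q G * lpNorm p η) ≤
      lpNorm p (∑' j : ℕ, bornK α0 B G C (j + 1) fun _ => η) :=
  forward_born_sum_lower_bound_general p q hpq α0 hα0 B G C η hη
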